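/- In the Log-DenseNet connection graph on vertices {0,...,L}, where vertex i connects to i - 2^k for each k with 0 ≤ k ≤ floor(log2 i) and 2^k ≤ i, for every t ≥ 0 and all i > j with i - j ≤ 2^t, the shortest-path distance from i to j is at most t + 1. -/

import Mathlib

/-!
Induction on `t`. A gap `i - j` of at most `2^(t+1)` is either at most `2^t`, or it exceeds `2^t`;
then `2^t < i`, so the edge `i → i - 2^t` exists and leaves a gap of at most `2^t`.
-/

def stepsTo {α : Type*} (E : α → α → Prop) : ℕ → α → α → Prop
  | 0, i, j => i = j
  | m + 1, i, j => ∃ k, E i k ∧ stepsTo E m k j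

/-- Log-DenseNet connection graph: vertex `i` connects to `i - 2^k` for `0 ≤ k ≤ ⌊log₂ i⌋`
(so that `2^k ≤ i`). -/
def logDenseEdge (L : ℕ) (i j : ℕ) : Prop :=
  1 ≤ i ∧ i ≤ L ∧ ∃ k ≤ Nat.log 2 i, 2 ^ k ≤ i ∧ j = i - 2 ^ k

theorem logDenseEdge_sub_two_pow {L i k : ℕ} (hi : i ≤ L) (hk : 2 ^ k ≤ i) :
    logDenseEdge L i (i - 2 ^ k) :=
  ⟨Nat.one_le_two_pow.trans hk, hi, k, Nat.le_log_of_pow_le one_lt_two hk, hk, rfl⟩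

/-- For every `t ≥ 0` and all `i > j` with `i - j ≤ 2^t`, the shortest-path distance
from `i` to `j` is at most `t + 1`. -/
theorem stmt1 (L t i j : ℕ) (hi : i ≤ L) (hij : j < i) (h : i - j ≤ 2 ^ t) :
    ∃ m ≤ t + 1, stepsTo (logDenseEdge L) m i j := by
  induction t generalizing i j with
  | zero =>
    refine ⟨1, le_rfl, i - 2 ^ 0, logDenseEdge_sub_two_pow hi (by omega), ?_⟩
    show i - 2 ^ 0 = j
    omega
  | succ t ih =>
    by_cases hsmall : i - j ≤ 2 ^ t
    · obtain ⟨m, hm, hsteps⟩ := ih i j hi hij hsmall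
      exact ⟨m, by omega, hsteps⟩
    · have hpow : 2 ^ (t + 1) = 2 ^ t + 2 ^ t := by ring
      obtain ⟨m, hm, hsteps⟩ := ih (i - 2 ^ t) j (by omega) (by omega) (by omega)
      exact ⟨m + 1, by omega, i - 2 ^ t, logDenseEdge_sub_two_pow hi (by omega), hsteps⟩
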